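/- Let m ≥ 1 and s = 2t−2 with t ≥ 2. Among all partitions that are simultaneously s-core, (ms−1)-core and (ms+1)-core, the one with the largest number of parts has weight m²(t−1)²(t²−2t+3)/6 − m(t−1)²/2. -/

import Mathlib

/-- A partition: a weakly decreasing list of positive integers. -/
def IsPartition (l : List ℕ) : Prop :=
  l.Pairwise (· ≥ ·) ∧ ∀ x ∈ l, 0 < x

/-- Hook length at the cell in row `i`, column `j` (0-indexed). -/
def hookLength (l : List ℕ) (i j : ℕ) : ℕ :=
  (l.getD i 0 - j - 1) + ((l.filter (fun x => j < x)).length - i - 1) + 1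

/-- The Young diagram of `l` contains a hook of length `h`. -/
def HasHook (l : List ℕ) (h : ℕ) : Prop :=
  ∃ i j, j < l.getD i 0 ∧ hookLength l i j = h

/-- `l` is an `s`-core: no hook of length `s`. -/
def IsCore (s : ℕ) (l : List ℕ) : Prop := ¬ HasHook l s

/-- The conjugate (transpose) partition. -/
def conjugate (l : List ℕ) : List ℕ :=
  (List.range (l.headD 0)).map (fun j => (l.filter (fun x => j < x)).length)

def SelfConjugate (l : List ℕ) : Prop := conjugate l = l

/-- The staircase partition `(k, k-1, …, 1)`. -/
def staircase (k : ℕ) : List ℕ := (List.range k).map (fun i => k - i)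

/-- The minimal bead set: the set of first-column hook lengths. -/
def beadSet (l : List ℕ) : Finset ℕ :=
  (Finset.range l.length).image (fun i => l.getD i 0 + (l.length - 1 - i))

namespace TripleCore

/-- element access, getD form, for sorted lists -/
lemma sorted_getD_le {l : List ℕ} (hl : l.Pairwise (· ≥ ·)) {i k : ℕ}
    (hik : i ≤ k) (hk : k < l.length) : l.getD k 0 ≤ l.getD i 0 := by
  rw [List.getD_eq_getElem l 0 hk, List.getD_eq_getElem l 0 (lt_of_le_of_lt hik hk)]
  rcases eq_or_lt_of_le hik with rfl | hik'
  · exact le_refl _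
  · exact hl.rel_get_of_lt (a := ⟨i, lt_of_le_of_lt hik hk⟩) (b := ⟨k, hk⟩) hik'

/-- the column count -/
def colCount (l : List ℕ) (j : ℕ) : ℕ := (l.filter (fun x => j < x)).length

lemma colCount_le_length (l : List ℕ) (j : ℕ) : colCount l j ≤ l.length :=
  List.length_filter_le _ _

/-- key counting lemma -/
lemma lt_colCount_iff {l : List ℕ} (hl : l.Pairwise (· ≥ ·)) {k : ℕ} (hk : k < l.length)
    (j : ℕ) : k < colCount l j ↔ j < l.getD k 0 := by
  constructor
  · intro h
    by_contra hc
    push_neg at hc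
    -- l[k] ≤ j ⇒ colCount ≤ k
    have hdrop : (l.drop k).filter (fun x => j < x) = [] := by
      rw [List.filter_eq_nil_iff]
      intro a ha
      rw [List.mem_iff_getElem] at ha
      obtain ⟨n, hn, rfl⟩ := ha
      rw [List.getElem_drop]
      have h1 : k + n < l.length := by
        have := hn; rw [List.length_drop] at this; omega
      have h2 : l.getD (k+n) 0 ≤ l.getD k 0 := sorted_getD_le hl (Nat.le_add_right _ _) h1
      rw [List.getD_eq_getElem l 0 h1, List.getD_eq_getElem l 0 hk] at h2
      have h3 : l.getD k 0 = l[k] := List.getD_eq_getElem l 0 hk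
      simp only [decide_eq_true_eq]
      omega
    have : colCount l j ≤ k := by
      unfold colCount
      conv_lhs => rw [← List.take_append_drop k l]
      rw [List.filter_append, hdrop, List.length_append]
      simp only [List.length_nil, Nat.add_zero]
      calc ((l.take k).filter _).length ≤ (l.take k).length := List.length_filter_le _ _
        _ ≤ k := by rw [List.length_take]; omega
    omega
  · intro h
    have htake : (l.take (k+1)).filter (fun x => j < x) = l.take (k+1) := by
      rw [List.filter_eq_self]
      intro a ha
      rw [List.mem_iff_getElem] at ha
      obtain ⟨n, hn, rfl⟩ := ha
      have hn' : n < l.length := by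
        have := hn; rw [List.length_take] at this; omega
      have hnk : n ≤ k := by
        have := hn; rw [List.length_take] at this; omega
      rw [List.getElem_take]
      have h2 : l.getD k 0 ≤ l.getD n 0 := sorted_getD_le hl hnk hk
      rw [List.getD_eq_getElem l 0 hk, List.getD_eq_getElem l 0 hn'] at h2
      have h3 : l.getD k 0 = l[k] := List.getD_eq_getElem l 0 hk
      simp only [decide_eq_true_eq]
      omega
    have : k + 1 ≤ colCount l j := by
      unfold colCount
      conv_lhs => rw [show k + 1 = (l.take (k+1)).length by rw [List.length_take]; omega]
      conv_rhs => rw [← List.take_append_drop (k+1) l]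
      rw [List.filter_append, List.length_append, htake]
      omega
    omega


def beadFn (l : List ℕ) (i : ℕ) : ℕ := l.getD i 0 + (l.length - 1 - i)

lemma mem_beadSet_iff {l : List ℕ} {x : ℕ} :
    x ∈ beadSet l ↔ ∃ i, i < l.length ∧ beadFn l i = x := by
  simp [beadSet, beadFn, Finset.mem_image, Finset.mem_range]

lemma beadFn_anti {l : List ℕ} (hl : l.Pairwise (· ≥ ·)) {i k : ℕ}
    (hik : i < k) (hk : k < l.length) : beadFn l k < beadFn l i := by
  have h1 := sorted_getD_le hl (le_of_lt hik) hk
  unfold beadFn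
  omega

lemma beadFn_inj {l : List ℕ} (hl : l.Pairwise (· ≥ ·)) {i k : ℕ}
    (hi : i < l.length) (hk : k < l.length) (h : beadFn l i = beadFn l k) : i = k := by
  rcases lt_trichotomy i k with h' | h' | h'
  · have := beadFn_anti hl h' hk; omega
  · exact h'
  · have := beadFn_anti hl h' hi; omega

lemma beadFn_pos {l : List ℕ} (hp : ∀ x ∈ l, 0 < x) {i : ℕ} (hi : i < l.length) :
    0 < beadFn l i := by
  have : 0 < l.getD i 0 := by
    rw [List.getD_eq_getElem l 0 hi]
    exact hp _ (List.getElem_mem hi)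
  unfold beadFn; omega

lemma zero_not_mem_beadSet {l : List ℕ} (hp : ∀ x ∈ l, 0 < x) : 0 ∉ beadSet l := by
  rw [mem_beadSet_iff]
  rintro ⟨i, hi, h⟩
  have := beadFn_pos hp hi
  omega

lemma card_beadSet {l : List ℕ} (hl : l.Pairwise (· ≥ ·)) : (beadSet l).card = l.length := by
  unfold beadSet
  rw [Finset.card_image_of_injOn, Finset.card_range]
  intro i hi k hk h
  simp only [Finset.mem_coe, Finset.mem_range] at hi hk
  exact beadFn_inj hl hi hk h

lemma colCount_anti (l : List ℕ) {j j' : ℕ} (h : j ≤ j') : colCount l j' ≤ colCount l j := by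
  unfold colCount
  have heq : l.filter (fun x => j' < x) = (l.filter (fun x => j < x)).filter (fun x => j' < x) := by
    rw [List.filter_filter]
    congr 1
    funext x
    by_cases hx : j' < x
    · simp [hx, show j < x by omega]
    · simp [hx]
  rw [heq]
  exact List.length_filter_le _ _

/-- the complement position function -/
def posFn (l : List ℕ) (j : ℕ) : ℕ := j + (l.length - colCount l j)

lemma posFn_lt {l : List ℕ} (hl : l.Pairwise (· ≥ ·)) {i j : ℕ} (hi : i < l.length)
    (hj : j < l.getD i 0) : posFn l j < beadFn l i := by
  have hic : i < colCount l j := (lt_colCount_iff hl hi j).mpr hj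
  have hcn := colCount_le_length l j
  unfold posFn beadFn
  omega

lemma posFn_not_mem {l : List ℕ} (hl : l.Pairwise (· ≥ ·)) {j : ℕ}
    (hcj : 0 < colCount l j) : posFn l j ∉ beadSet l := by
  rw [mem_beadSet_iff]
  rintro ⟨k, hk, hbk⟩
  have hcn := colCount_le_length l j
  by_cases hkc : k < colCount l j
  · have h1 : j < l.getD k 0 := (lt_colCount_iff hl hk j).mp hkc
    unfold beadFn at hbk
    unfold posFn at hbk
    omega
  · have h1 : ¬ (j < l.getD k 0) := fun hc => hkc ((lt_colCount_iff hl hk j).mpr hc)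
    unfold beadFn at hbk
    unfold posFn at hbk
    omega

lemma hook_eq_sub {l : List ℕ} (hl : l.Pairwise (· ≥ ·)) {i j : ℕ} (hi : i < l.length)
    (hj : j < l.getD i 0) : hookLength l i j + posFn l j = beadFn l i := by
  have hic : i < colCount l j := (lt_colCount_iff hl hi j).mpr hj
  have hcn := colCount_le_length l j
  unfold hookLength posFn beadFn colCount
  unfold colCount at hic hcn
  omega

lemma posFn_strictMono {l : List ℕ} {j j' : ℕ} (h : j < j') : posFn l j < posFn l j' := by
  have h1 := colCount_anti l (le_of_lt h)
  have h2 := colCount_le_length l j'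
  unfold posFn
  omega

/-- Main characterization of hooks in terms of the bead set. -/
lemma hasHook_iff {l : List ℕ} (hl : IsPartition l) {h : ℕ} (hh : 1 ≤ h) :
    HasHook l h ↔ ∃ x ∈ beadSet l, h ≤ x ∧ x - h ∉ beadSet l := by
  obtain ⟨hsort, hpos⟩ := hl
  constructor
  · rintro ⟨i, j, hj, rfl⟩
    have hi : i < l.length := by
      by_contra hc
      push_neg at hc
      rw [List.getD_eq_default l 0 hc] at hj
      omega
    refine ⟨beadFn l i, mem_beadSet_iff.mpr ⟨i, hi, rfl⟩, ?_, ?_⟩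
    · have := hook_eq_sub hsort hi hj
      omega
    · have heq := hook_eq_sub hsort hi hj
      have hxy : beadFn l i - hookLength l i j = posFn l j := by omega
      rw [hxy]
      have hcj : 0 < colCount l j := lt_of_le_of_lt (Nat.zero_le i) ((lt_colCount_iff hsort hi j).mpr hj)
      exact posFn_not_mem hsort hcj
  · rintro ⟨x, hx, hhx, hnx⟩
    obtain ⟨i, hi, rfl⟩ := mem_beadSet_iff.mp hx
    set n := l.length with hn
    set y := beadFn l i - h with hy
    -- the complement of the bead set below beadFn l i
    set compl : Finset ℕ := (Finset.range (beadFn l i)) \ (beadSet l) with hcompl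
    have hycompl : y ∈ compl := by
      rw [hcompl, Finset.mem_sdiff, Finset.mem_range]
      exact ⟨by omega, hnx⟩
    -- beadSet ∩ range (beadFn l i) = image of Ico (i+1) n
    have hinter : (beadSet l) ∩ (Finset.range (beadFn l i)) = Finset.image (beadFn l) (Finset.Ico (i+1) n) := by
      ext z
      simp only [Finset.mem_inter, Finset.mem_range, Finset.mem_image, Finset.mem_Ico, mem_beadSet_iff]
      constructor
      · rintro ⟨⟨k, hk, rfl⟩, hz⟩
        refine ⟨k, ⟨?_, hk⟩, rfl⟩
        by_contra hc
        push_neg at hc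
        rcases Nat.lt_or_ge k i with hki | hki
        · have := beadFn_anti hsort hki hi; omega
        · have : k = i := by omega
          subst this; omega
      · rintro ⟨k, ⟨hik, hk⟩, rfl⟩
        exact ⟨⟨k, hk, rfl⟩, beadFn_anti hsort hik hk⟩
    have hintercard : ((beadSet l) ∩ (Finset.range (beadFn l i))).card = n - 1 - i := by
      rw [hinter, Finset.card_image_of_injOn, Nat.card_Ico]
      · omega
      · intro a ha b hb hab
        simp only [Finset.mem_coe, Finset.mem_Ico] at ha hb
        exact beadFn_inj hsort (ha.2) (hb.2) hab
    have hli : l.getD i 0 + (n - 1 - i) = beadFn l i := rfl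
    have hcomplcard : compl.card = l.getD i 0 := by
      have h1 : (compl).card + ((Finset.range (beadFn l i)) ∩ (beadSet l)).card = (Finset.range (beadFn l i)).card :=
        Finset.card_sdiff_add_card_inter _ _
      rw [Finset.inter_comm, hintercard, Finset.card_range] at h1
      omega
    -- the map j ↦ posFn l j from range (l.getD i 0) into compl
    have himg : Finset.image (posFn l) (Finset.range (l.getD i 0)) ⊆ compl := by
      intro z hz
      simp only [Finset.mem_image, Finset.mem_range] at hz
      obtain ⟨j, hj, rfl⟩ := hz
      rw [hcompl, Finset.mem_sdiff, Finset.mem_range]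
      refine ⟨posFn_lt hsort hi hj, ?_⟩
      have hcj : 0 < colCount l j := lt_of_le_of_lt (Nat.zero_le i) ((lt_colCount_iff hsort hi j).mpr hj)
      exact posFn_not_mem hsort hcj
    have himgcard : (Finset.image (posFn l) (Finset.range (l.getD i 0))).card = l.getD i 0 := by
      rw [Finset.card_image_of_injOn, Finset.card_range]
      intro a ha b hb hab
      simp only [Finset.mem_coe, Finset.mem_range] at ha hb
      rcases lt_trichotomy a b with h' | h' | h'
      · have := posFn_strictMono (l := l) h'; omega
      · exact h'
      · have := posFn_strictMono (l := l) h'; omega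
    have heq : Finset.image (posFn l) (Finset.range (l.getD i 0)) = compl :=
      Finset.eq_of_subset_of_card_le himg (by omega)
    rw [← heq] at hycompl
    simp only [Finset.mem_image, Finset.mem_range] at hycompl
    obtain ⟨j, hj, hjy⟩ := hycompl
    refine ⟨i, j, ?_, ?_⟩
    · rw [List.getD_eq_getElem l 0 hi]
      rw [List.getD_eq_getElem l 0 hi] at hj
      exact hj
    · have := hook_eq_sub hsort hi hj
      omega

/-- s-core characterization -/
lemma isCore_iff {l : List ℕ} (hl : IsPartition l) {h : ℕ} (hh : 1 ≤ h) :
    IsCore h l ↔ ∀ x ∈ beadSet l, h ≤ x → x - h ∈ beadSet l := by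
  unfold IsCore
  rw [hasHook_iff hl hh]
  push_neg
  constructor
  · intro H x hx hhx
    by_contra hc
    exact hc (H x hx hhx)
  · intro H x hx hhx
    exact H x hx hhx


lemma list_sum_eq_range_sum (l : List ℕ) : l.sum = ∑ i ∈ Finset.range l.length, l.getD i 0 := by
  induction l with
  | nil => simp
  | cons a l ih =>
    rw [List.sum_cons, List.length_cons, Finset.sum_range_succ']
    simp only [List.getD_cons_succ, List.getD_cons_zero]
    rw [ih]
    ring

lemma sum_beadSet {l : List ℕ} (hl : l.Pairwise (· ≥ ·)) :
    2 * ∑ x ∈ beadSet l, x = 2 * l.sum + l.length * (l.length - 1) := by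
  unfold beadSet
  have hfn : (fun i => l.getD i 0 + (l.length - 1 - i)) = beadFn l := rfl
  rw [hfn]
  rw [Finset.sum_image (fun i hi k hk h => beadFn_inj hl (Finset.mem_range.mp hi) (Finset.mem_range.mp hk) h)]
  have h1 : ∑ i ∈ Finset.range l.length, beadFn l i
      = l.sum + ∑ i ∈ Finset.range l.length, (l.length - 1 - i) := by
    simp only [beadFn]
    rw [Finset.sum_add_distrib, list_sum_eq_range_sum]
  have h2 : ∑ i ∈ Finset.range l.length, (l.length - 1 - i) = ∑ i ∈ Finset.range l.length, i :=
    Finset.sum_range_reflect (fun i => i) l.length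
  have h3 := Finset.sum_range_id_mul_two l.length
  rw [h1, h2]
  omega

/-- Partition built from a bead set. -/
def ofBeads (B : Finset ℕ) : List ℕ :=
  (List.range B.card).map
    (fun i => (B.sort (· ≤ ·)).getD (B.card - 1 - i) 0 - (B.card - 1 - i))

lemma sort_ge_index {B : Finset ℕ} (h0 : 0 ∉ B) :
    ∀ k, (hk : k < (B.sort (· ≤ ·)).length) → k + 1 ≤ (B.sort (· ≤ ·))[k] := by
  intro k
  induction k with
  | zero =>
    intro hk
    have hmem : (B.sort (· ≤ ·))[0] ∈ B := (Finset.mem_sort _).mp (List.getElem_mem hk)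
    have : (B.sort (· ≤ ·))[0] ≠ 0 := fun hc => h0 (hc ▸ hmem)
    omega
  | succ k ih =>
    intro hk
    have hk' : k < (B.sort (· ≤ ·)).length := by omega
    have hlt : (B.sort (· ≤ ·))[k] < (B.sort (· ≤ ·))[k+1] :=
      (Finset.sortedLT_sort B).pairwise.rel_get_of_lt (a := ⟨k, hk'⟩) (b := ⟨k+1, hk⟩) (by simp)
    have := ih hk'
    omega

lemma sort_gap {B : Finset ℕ} :
    ∀ a b, (hab : a ≤ b) → (hb : b < (B.sort (· ≤ ·)).length) →
      (B.sort (· ≤ ·))[a]'(by omega) + (b - a) ≤ (B.sort (· ≤ ·))[b] := by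
  intro a b
  induction b with
  | zero => intro hab hb; interval_cases a; simp
  | succ b ih =>
    intro hab hb
    rcases Nat.lt_or_ge a (b+1) with h' | h'
    · have hb' : b < (B.sort (· ≤ ·)).length := by omega
      have h1 := ih (by omega) hb'
      have hlt : (B.sort (· ≤ ·))[b] < (B.sort (· ≤ ·))[b+1] :=
        (Finset.sortedLT_sort B).pairwise.rel_get_of_lt (a := ⟨b, hb'⟩) (b := ⟨b+1, hb⟩) (by simp)
      omega
    · have : a = b + 1 := by omega
      subst this
      simp

lemma ofBeads_length (B : Finset ℕ) : (ofBeads B).length = B.card := by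
  simp [ofBeads]

lemma ofBeads_getD {B : Finset ℕ} {i : ℕ} (hi : i < B.card) :
    (ofBeads B).getD i 0 = (B.sort (· ≤ ·)).getD (B.card - 1 - i) 0 - (B.card - 1 - i) := by
  rw [List.getD_eq_getElem _ 0 (by simpa [ofBeads_length] using hi)]
  simp [ofBeads]

lemma ofBeads_isPartition {B : Finset ℕ} (h0 : 0 ∉ B) : IsPartition (ofBeads B) := by
  have hlen : (B.sort (· ≤ ·)).length = B.card := Finset.length_sort _
  constructor
  · rw [List.pairwise_iff_getElem]
    intro i k hi hk hik
    rw [ofBeads_length] at hi hk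
    have gi : (ofBeads B)[i]'(by rwa [ofBeads_length]) = (ofBeads B).getD i 0 :=
      (List.getD_eq_getElem _ 0 _).symm
    have gk : (ofBeads B)[k]'(by rwa [ofBeads_length]) = (ofBeads B).getD k 0 :=
      (List.getD_eq_getElem _ 0 _).symm
    rw [gi, gk, ofBeads_getD hi, ofBeads_getD hk]
    set a := B.card - 1 - k with ha
    set b := B.card - 1 - i with hb
    have hab : a ≤ b := by omega
    have hbl : b < (B.sort (· ≤ ·)).length := by omega
    have hgap := sort_gap a b hab hbl
    rw [List.getD_eq_getElem _ 0 (by omega : a < (B.sort (· ≤ ·)).length),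
        List.getD_eq_getElem _ 0 hbl]
    simp only [ge_iff_le]
    omega
  · intro x hx
    rw [List.mem_iff_getElem] at hx
    obtain ⟨i, hi, rfl⟩ := hx
    rw [ofBeads_length] at hi
    have gi : (ofBeads B)[i]'(by rwa [ofBeads_length]) = (ofBeads B).getD i 0 :=
      (List.getD_eq_getElem _ 0 _).symm
    rw [gi, ofBeads_getD hi]
    have hbl : B.card - 1 - i < (B.sort (· ≤ ·)).length := by omega
    have := sort_ge_index h0 _ hbl
    rw [List.getD_eq_getElem _ 0 hbl]
    omega

lemma ofBeads_beadFn {B : Finset ℕ} (h0 : 0 ∉ B) {i : ℕ} (hi : i < B.card) :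
    beadFn (ofBeads B) i = (B.sort (· ≤ ·)).getD (B.card - 1 - i) 0 := by
  have hlen : (B.sort (· ≤ ·)).length = B.card := Finset.length_sort _
  have hbl : B.card - 1 - i < (B.sort (· ≤ ·)).length := by omega
  have hge := sort_ge_index h0 _ hbl
  unfold beadFn
  rw [ofBeads_length, ofBeads_getD hi, List.getD_eq_getElem _ 0 hbl]
  have : B.card - 1 - i = (B.card - 1 - i) := rfl
  omega

lemma ofBeads_beadSet {B : Finset ℕ} (h0 : 0 ∉ B) : beadSet (ofBeads B) = B := by
  have hlen : (B.sort (· ≤ ·)).length = B.card := Finset.length_sort _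
  ext x
  rw [mem_beadSet_iff]
  constructor
  · rintro ⟨i, hi, rfl⟩
    rw [ofBeads_length] at hi
    rw [ofBeads_beadFn h0 hi]
    have hbl : B.card - 1 - i < (B.sort (· ≤ ·)).length := by omega
    rw [List.getD_eq_getElem _ 0 hbl]
    exact (Finset.mem_sort _).mp (List.getElem_mem hbl)
  · intro hx
    have hx' : x ∈ B.sort (· ≤ ·) := (Finset.mem_sort _).mpr hx
    rw [List.mem_iff_getElem] at hx'
    obtain ⟨j, hj, rfl⟩ := hx'
    refine ⟨B.card - 1 - j, by rw [ofBeads_length]; omega, ?_⟩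
    have hjj : B.card - 1 - (B.card - 1 - j) = j := by omega
    rw [ofBeads_beadFn h0 (by omega), hjj, List.getD_eq_getElem _ 0 hj]

lemma sort_sum (B : Finset ℕ) : (B.sort (· ≤ ·)).sum = ∑ x ∈ B, x := by
  have h := Finset.sort_eq B (· ≤ ·)
  calc (B.sort (· ≤ ·)).sum = ((B.sort (· ≤ ·) : Multiset ℕ)).sum := by
        rw [Multiset.sum_coe]
    _ = B.val.sum := by rw [h]
    _ = ∑ x ∈ B, x := by rw [Finset.sum]; simp

lemma ofBeads_sum {B : Finset ℕ} (h0 : 0 ∉ B) :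
    2 * (ofBeads B).sum + B.card * (B.card - 1) = 2 * ∑ x ∈ B, x := by
  have hpart := ofBeads_isPartition h0
  have h1 := sum_beadSet hpart.1
  rw [ofBeads_beadSet h0, ofBeads_length] at h1
  omega


/-! ### beads sets -/

def beads (s : ℕ) (a : ℕ → ℕ) : Finset ℕ :=
  (Finset.Icc 1 (s-1)).biUnion (fun r => (Finset.range (a r)).image (fun k => r + k * s))

lemma comp_mod {s r k : ℕ} (hr : r < s) : (r + k*s) % s = r := by
  rw [Nat.add_mul_mod_self_right, Nat.mod_eq_of_lt hr]

lemma comp_div {s r k : ℕ} (hr : r < s) : (r + k*s) / s = k := by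
  rw [Nat.add_mul_div_right _ _ (by omega : 0 < s), Nat.div_eq_of_lt hr, Nat.zero_add]

lemma mem_beads {s : ℕ} (hs : 2 ≤ s) (a : ℕ → ℕ) (x : ℕ) :
    x ∈ beads s a ↔ 0 < x % s ∧ x / s < a (x % s) := by
  simp only [beads, Finset.mem_biUnion, Finset.mem_Icc, Finset.mem_image, Finset.mem_range]
  constructor
  · rintro ⟨r, ⟨hr1, hr2⟩, k, hk, rfl⟩
    have hrs : r < s := by omega
    rw [comp_mod hrs, comp_div hrs]
    exact ⟨by omega, hk⟩
  · rintro ⟨h1, h2⟩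
    have hrs : x % s < s := Nat.mod_lt x (by omega)
    refine ⟨x % s, ⟨by omega, by omega⟩, x / s, h2, Nat.mod_add_div' x s⟩

lemma mem_beads_comp {s : ℕ} (hs : 2 ≤ s) {a : ℕ → ℕ} {r k : ℕ} (h1 : 1 ≤ r) (h2 : r < s) :
    r + k*s ∈ beads s a ↔ k < a r := by
  rw [mem_beads hs, comp_mod h2, comp_div h2]
  constructor
  · exact fun h => h.2
  · exact fun h => ⟨h1, h⟩

lemma zero_not_mem_beads {s : ℕ} (hs : 2 ≤ s) (a : ℕ → ℕ) : 0 ∉ beads s a := by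
  rw [mem_beads hs]
  simp

lemma beads_card {s : ℕ} (hs : 2 ≤ s) (a : ℕ → ℕ) :
    (beads s a).card = ∑ r ∈ Finset.Icc 1 (s-1), a r := by
  unfold beads
  rw [Finset.card_biUnion]
  · refine Finset.sum_congr rfl (fun r hr => ?_)
    rw [Finset.card_image_of_injOn, Finset.card_range]
    intro k _ k' _ hkk
    have hkk' : r + k * s = r + k' * s := hkk
    have : k * s = k' * s := by omega
    exact Nat.eq_of_mul_eq_mul_right (by omega) this
  · intro r hr r' hr' hne
    rw [Function.onFun, Finset.disjoint_left]
    intro x hx hx'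
    simp only [Finset.mem_image, Finset.mem_range] at hx hx'
    obtain ⟨k, _, rfl⟩ := hx
    obtain ⟨k', _, he⟩ := hx'
    rw [Finset.mem_coe, Finset.mem_Icc] at hr hr'
    have h1 : (r + k*s) % s = r := comp_mod (by omega)
    have h2 : (r' + k'*s) % s = r' := comp_mod (by omega)
    rw [he] at h2
    omega

lemma beads_sum {s : ℕ} (hs : 2 ≤ s) (a : ℕ → ℕ) :
    2 * ∑ x ∈ beads s a, x
      = ∑ r ∈ Finset.Icc 1 (s-1), (2*r*(a r) + s*((a r)*((a r)-1))) := by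
  unfold beads
  rw [Finset.sum_biUnion, Finset.mul_sum]
  · refine Finset.sum_congr rfl (fun r hr => ?_)
    rw [Finset.sum_image ?hinj]
    case hinj =>
      intro k _ k' _ hkk
      have hkk' : r + k * s = r + k' * s := hkk
      have : k * s = k' * s := by omega
      exact Nat.eq_of_mul_eq_mul_right (by omega) this
    have h1 : ∑ k ∈ Finset.range (a r), (r + k * s) = (a r) * r + (∑ k ∈ Finset.range (a r), k) * s := by
      rw [Finset.sum_add_distrib, Finset.sum_const, Finset.card_range, smul_eq_mul, ← Finset.sum_mul]
    have h2 := Finset.sum_range_id_mul_two (a r)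
    rw [h1]
    have h3 : 2 * ((a r) * r + (∑ k ∈ Finset.range (a r), k) * s)
        = 2 * (a r) * r + ((∑ k ∈ Finset.range (a r), k) * 2) * s := by ring
    rw [h3, h2]
    ring
  · intro r hr r' hr' hne
    simp only [Function.onFun]
    rw [Finset.disjoint_left]
    intro x hx hx'
    simp only [Finset.mem_image, Finset.mem_range] at hx hx'
    obtain ⟨k, _, rfl⟩ := hx
    obtain ⟨k', _, he⟩ := hx'
    rw [Finset.mem_coe, Finset.mem_Icc] at hr hr'
    have h1 : (r + k*s) % s = r := comp_mod (by omega)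
    have h2 : (r' + k'*s) % s = r' := comp_mod (by omega)
    rw [he] at h2
    omega

lemma downclosed_eq_range (K : Finset ℕ) (h : ∀ k, k + 1 ∈ K → k ∈ K) :
    K = Finset.range K.card := by
  have hd : ∀ d k, k + d ∈ K → k ∈ K := by
    intro d
    induction d with
    | zero => intro k hk; simpa using hk
    | succ d ih =>
      intro k hk
      have : (k + 1) + d = k + (d + 1) := by ring
      rw [← this] at hk
      exact h k (ih (k+1) hk)
  rcases K.eq_empty_or_nonempty with rfl | hne
  · simp
  · set M := K.max' hne with hM
    have hK : K = Finset.range (M + 1) := by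
      ext z
      rw [Finset.mem_range]
      constructor
      · intro hz
        have := K.le_max' z hz
        omega
      · intro hz
        have hMmem : M ∈ K := K.max'_mem hne
        have : z + (M - z) = M := by omega
        exact hd (M - z) z (by rwa [this])
    rw [hK, Finset.card_range]

lemma eq_beads_of_closed {s : ℕ} (hs : 2 ≤ s) {B : Finset ℕ} (h0 : 0 ∉ B)
    (hc : ∀ x ∈ B, s ≤ x → x - s ∈ B) :
    B = beads s (fun r => (B.filter (fun x => x % s = r)).card) := by
  -- no multiples of s
  have hmult : ∀ k, k * s ∉ B := by
    intro k
    induction k with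
    | zero => simpa using h0
    | succ k ih =>
      intro hk
      have h1 : s ≤ (k+1) * s := by
        calc s = 1 * s := (Nat.one_mul s).symm
          _ ≤ (k+1) * s := Nat.mul_le_mul_right s (by omega)
      have h2 := hc _ hk h1
      have h3 : (k+1) * s - s = k * s := by
        have : (k+1) * s = k * s + s := by ring
        omega
      rw [h3] at h2
      exact ih h2
  -- each residue class is downward closed
  have hdc : ∀ r, r < s → ∀ k, (r + (k+1)*s) ∈ B → (r + k*s) ∈ B := by
    intro r hrs k hk
    have h1 : s ≤ r + (k+1)*s := by
      have : s ≤ (k+1)*s := by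
        calc s = 1 * s := (Nat.one_mul s).symm
          _ ≤ (k+1) * s := Nat.mul_le_mul_right s (by omega)
      omega
    have h2 := hc _ hk h1
    have h3 : r + (k+1)*s - s = r + k*s := by
      have : (k+1) * s = k * s + s := by ring
      omega
    rwa [h3] at h2
  ext x
  rw [mem_beads hs]
  constructor
  · intro hx
    have hxmod : 0 < x % s := by
      rcases Nat.eq_zero_or_pos (x % s) with h | h
      · exfalso
        have : x = (x / s) * s := by
          have := Nat.mod_add_div' x s
          omega
        exact hmult (x/s) (this ▸ hx)
      · exact h
    refine ⟨hxmod, ?_⟩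
    set r := x % s with hr
    set K : Finset ℕ := (B.filter (fun y => y % s = r)).image (fun y => y / s) with hKdef
    have hKcard : K.card = (B.filter (fun y => y % s = r)).card := by
      rw [hKdef, Finset.card_image_of_injOn]
      intro y hy y' hy' hyy
      simp only [Finset.mem_coe, Finset.mem_filter] at hy hy'
      have hyy' : y / s = y' / s := hyy
      have e3 : (y / s) * s = (y' / s) * s := by rw [hyy']
      have e1 := Nat.mod_add_div' y s
      have e2 := Nat.mod_add_div' y' s
      rw [hy.2] at e1
      rw [hy'.2] at e2
      omega
    have hKdown : ∀ k, k + 1 ∈ K → k ∈ K := by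
      intro k hk
      simp only [hKdef, Finset.mem_image, Finset.mem_filter] at hk ⊢
      obtain ⟨y, ⟨hyB, hymod⟩, hydiv⟩ := hk
      have hrs : r < s := by rw [hr]; exact Nat.mod_lt x (by omega)
      have hyrep : y = r + (k+1)*s := by
        have := Nat.mod_add_div' y s
        rw [hymod, hydiv] at this
        omega
      have hmem := hdc r hrs k (hyrep ▸ hyB)
      exact ⟨r + k*s, ⟨hmem, comp_mod hrs⟩, comp_div hrs⟩
    have hKr : K = Finset.range K.card := downclosed_eq_range K hKdown
    have hxK : x / s ∈ K := by
      simp only [hKdef, Finset.mem_image, Finset.mem_filter]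
      exact ⟨x, ⟨hx, rfl⟩, rfl⟩
    rw [hKr, Finset.mem_range, hKcard] at hxK
    exact hxK
  · rintro ⟨h1, h2⟩
    set r := x % s with hr
    set K : Finset ℕ := (B.filter (fun y => y % s = r)).image (fun y => y / s) with hKdef
    have hKcard : K.card = (B.filter (fun y => y % s = r)).card := by
      rw [hKdef, Finset.card_image_of_injOn]
      intro y hy y' hy' hyy
      simp only [Finset.mem_coe, Finset.mem_filter] at hy hy'
      have hyy' : y / s = y' / s := hyy
      have e3 : (y / s) * s = (y' / s) * s := by rw [hyy']
      have e1 := Nat.mod_add_div' y s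
      have e2 := Nat.mod_add_div' y' s
      rw [hy.2] at e1
      rw [hy'.2] at e2
      omega
    have hKdown : ∀ k, k + 1 ∈ K → k ∈ K := by
      intro k hk
      simp only [hKdef, Finset.mem_image, Finset.mem_filter] at hk ⊢
      obtain ⟨y, ⟨hyB, hymod⟩, hydiv⟩ := hk
      have hrs : r < s := by rw [hr]; exact Nat.mod_lt x (by omega)
      have hyrep : y = r + (k+1)*s := by
        have := Nat.mod_add_div' y s
        rw [hymod, hydiv] at this
        omega
      have hmem := hdc r hrs k (hyrep ▸ hyB)
      exact ⟨r + k*s, ⟨hmem, comp_mod hrs⟩, comp_div hrs⟩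
    have hKr : K = Finset.range K.card := downclosed_eq_range K hKdown
    have hxK : x / s ∈ K := by
      rw [hKr, Finset.mem_range, hKcard]
      exact h2
    simp only [hKdef, Finset.mem_image, Finset.mem_filter] at hxK
    obtain ⟨y, ⟨hyB, hymod⟩, hydiv⟩ := hxK
    have e1 := Nat.mod_add_div' y s
    have e2 := Nat.mod_add_div' x s
    rw [hymod, hydiv] at e1
    have : y = x := by omega
    exact this ▸ hyB


/-! ### the extremal bound function -/

def bnd (m u r : ℕ) : ℕ := if r ≤ u - 1 then r * m else (2*u - r) * m - 1

lemma bnd_one_le {m u : ℕ} (hm : 1 ≤ m) (hu : 1 ≤ u) : bnd m u 1 ≤ m := by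
  unfold bnd
  split_ifs with h
  · omega
  · have hu1 : u = 1 := by omega
    subst hu1
    norm_num

lemma bnd_last {m u : ℕ} (hm : 1 ≤ m) (hu : 1 ≤ u) : bnd m u (2*u-1) + 1 ≤ m := by
  unfold bnd
  split_ifs with h
  · omega
  · have e1 : 2*u - (2*u-1) = 1 := by omega
    rw [e1, one_mul]
    omega

lemma bnd_step_up {m u : ℕ} (hm : 1 ≤ m) (hu : 1 ≤ u) {r : ℕ} (h2 : 2 ≤ r) (h3 : r ≤ 2*u-1) :
    bnd m u r ≤ bnd m u (r-1) + m := by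
  unfold bnd
  split_ifs with ha hb hb
  · have e : (r-1)*m + m = r*m := by
      have h' : r - 1 + 1 = r := by omega
      calc (r-1)*m + m = (r-1+1)*m := by rw [Nat.add_mul, one_mul]
        _ = r*m := by rw [h']
    omega
  · omega
  · have hr : r = u := by omega
    rw [hr]
    have e1 : 2*u - u = u := by omega
    rw [e1]
    have e : (u-1)*m + m = u*m := by
      have h' : u - 1 + 1 = u := by omega
      calc (u-1)*m + m = (u-1+1)*m := by rw [Nat.add_mul, one_mul]
        _ = u*m := by rw [h']
    omega
  · have e : (2*u-r)*m + m = (2*u-(r-1))*m := by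
      have h' : 2*u - r + 1 = 2*u - (r-1) := by omega
      calc (2*u-r)*m + m = (2*u-r+1)*m := by rw [Nat.add_mul, one_mul]
        _ = _ := by rw [h']
    omega

lemma bnd_step_down {m u : ℕ} (hm : 1 ≤ m) (hu : 1 ≤ u) {r : ℕ} (h1 : 1 ≤ r) (h3 : r ≤ 2*u-2) :
    bnd m u r ≤ bnd m u (r+1) + m := by
  unfold bnd
  split_ifs with ha hb hb
  · have e : (r+1)*m = r*m + m := by rw [Nat.add_mul, one_mul]
    omega
  · have hr : r = u - 1 := by omega
    have e1 : 2*u - (r+1) = u := by omega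
    rw [e1, hr]
    have e : (u-1)*m + m = u*m := by
      have h' : u - 1 + 1 = u := by omega
      calc (u-1)*m + m = (u-1+1)*m := by rw [Nat.add_mul, one_mul]
        _ = u*m := by rw [h']
    omega
  · omega
  · have e : (2*u-(r+1))*m + m = (2*u-r)*m := by
      have h' : 2*u - (r+1) + 1 = 2*u - r := by omega
      calc (2*u-(r+1))*m + m = (2*u-(r+1)+1)*m := by rw [Nat.add_mul, one_mul]
        _ = _ := by rw [h']
    omega

/-! ### closure properties -/

lemma beads_closed_sub_s {s : ℕ} (hs : 2 ≤ s) (a : ℕ → ℕ) :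
    ∀ x ∈ beads s a, s ≤ x → x - s ∈ beads s a := by
  intro x hx hsx
  rw [mem_beads hs] at hx
  obtain ⟨h1, h2⟩ := hx
  have hrs : x % s < s := Nat.mod_lt x (by omega)
  have e := Nat.mod_add_div' x s
  have hk1 : 1 ≤ x / s := by
    rcases Nat.eq_zero_or_pos (x / s) with h | h
    · rw [h] at e; simp at e; omega
    · exact h
  have hsub : x - s = x % s + (x / s - 1) * s := by
    have e2 : (x/s - 1) * s = (x/s)*s - s := by rw [Nat.sub_mul, one_mul]
    have e3 : s ≤ (x/s)*s := by
      calc s = 1*s := (one_mul s).symm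
        _ ≤ _ := Nat.mul_le_mul_right s hk1
    omega
  rw [hsub, mem_beads_comp hs (by omega) hrs]
  omega

lemma bnd_closed_up {m u : ℕ} (hm : 1 ≤ m) (hu : 1 ≤ u) :
    ∀ x ∈ beads (2*u) (bnd m u), m*(2*u)+1 ≤ x → x - (m*(2*u)+1) ∈ beads (2*u) (bnd m u) := by
  intro x hx hle
  have hs : 2 ≤ 2*u := by omega
  rw [mem_beads hs] at hx
  obtain ⟨h1, h2⟩ := hx
  set r := x % (2*u) with hrdef
  set k := x / (2*u) with hkdef
  have hrs : r < 2*u := hrdef ▸ Nat.mod_lt x (by omega)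
  have e : r + k*(2*u) = x := by rw [hrdef, hkdef]; exact Nat.mod_add_div' x (2*u)
  clear_value r k
  clear hrdef hkdef
  have hkm : m ≤ k := by
    by_contra hc
    push_neg at hc
    have c1 : (k+1) * (2*u) ≤ m*(2*u) := Nat.mul_le_mul_right _ (by omega)
    have e2 : (k+1)*(2*u) = k*(2*u) + 2*u := by rw [Nat.add_mul, one_mul]
    omega
  have hr2 : 2 ≤ r := by
    by_contra hc
    push_neg at hc
    have hr1 : r = 1 := by omega
    have hb1 := bnd_one_le (m := m) (u := u) hm hu
    rw [hr1] at h2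
    omega
  have e3 : m*(2*u) ≤ k*(2*u) := Nat.mul_le_mul_right _ hkm
  have e2 : (k-m)*(2*u) = k*(2*u) - m*(2*u) := by rw [Nat.sub_mul]
  have hsub : x - (m*(2*u)+1) = (r-1) + (k-m)*(2*u) := by omega
  rw [hsub, mem_beads_comp hs (by omega) (by omega)]
  have hstep := bnd_step_up (m := m) (u := u) hm hu hr2 (by omega)
  omega

lemma bnd_closed_down {m u : ℕ} (hm : 1 ≤ m) (hu : 1 ≤ u) :
    ∀ x ∈ beads (2*u) (bnd m u), m*(2*u)-1 ≤ x → x - (m*(2*u)-1) ∈ beads (2*u) (bnd m u) := by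
  intro x hx hle
  have hs : 2 ≤ 2*u := by omega
  rw [mem_beads hs] at hx
  obtain ⟨h1, h2⟩ := hx
  set r := x % (2*u) with hrdef
  set k := x / (2*u) with hkdef
  have hrs : r < 2*u := hrdef ▸ Nat.mod_lt x (by omega)
  have e : r + k*(2*u) = x := by rw [hrdef, hkdef]; exact Nat.mod_add_div' x (2*u)
  clear_value r k
  clear hrdef hkdef
  have e4 : 2*u ≤ m*(2*u) := by
    calc 2*u = 1*(2*u) := (one_mul _).symm
      _ ≤ _ := Nat.mul_le_mul_right _ hm
  have hblast := bnd_last (m := m) (u := u) hm hu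
  have hkm : m ≤ k := by
    by_contra hc
    push_neg at hc
    have hk2 : k = m-1 ∨ k + 2 ≤ m := by omega
    rcases hk2 with hk2 | hk2
    · rcases Nat.lt_or_ge r (2*u-1) with hrr | hrr
      · -- x = r + (m−1)*2u ≤ m*2u − 2 < m*2u − 1
        have c1 : k*(2*u) = m*(2*u) - 2*u := by rw [hk2, Nat.sub_mul, one_mul]
        omega
      · have hr1 : r = 2*u-1 := by omega
        rw [hr1] at h2
        omega
    · have c1 : k*(2*u) ≤ (m-2)*(2*u) := Nat.mul_le_mul_right _ (by omega)
      have c2 : (m-2)*(2*u) = m*(2*u) - 2*(2*u) := by rw [Nat.sub_mul]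
      have c3 : 2*(2*u) ≤ m*(2*u) := Nat.mul_le_mul (by omega : 2 ≤ m) (le_refl (2*u))
      omega
  have hr2 : r ≤ 2*u-2 := by
    by_contra hc
    push_neg at hc
    have hr1 : r = 2*u-1 := by omega
    rw [hr1] at h2
    omega
  have e3 : m*(2*u) ≤ k*(2*u) := Nat.mul_le_mul_right _ hkm
  have e2 : (k-m)*(2*u) = k*(2*u) - m*(2*u) := by rw [Nat.sub_mul]
  have hsub : x - (m*(2*u)-1) = (r+1) + (k-m)*(2*u) := by omega
  rw [hsub, mem_beads_comp hs (by omega) (by omega)]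
  have hstep := bnd_step_down (m := m) (u := u) hm hu (by omega) hr2
  omega

/-! ### upper bounds on residue counts -/

lemma a_bounds {u m : ℕ} (hm : 1 ≤ m) (hu : 1 ≤ u) {a : ℕ → ℕ}
    (hup : ∀ x ∈ beads (2*u) a, m*(2*u)+1 ≤ x → x - (m*(2*u)+1) ∈ beads (2*u) a)
    (hdown : ∀ x ∈ beads (2*u) a, m*(2*u)-1 ≤ x → x - (m*(2*u)-1) ∈ beads (2*u) a) :
    ∀ r ∈ Finset.Icc 1 (2*u-1), a r ≤ bnd m u r := by
  have hs : 2 ≤ 2*u := by omega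
  have e4 : 2*u ≤ m*(2*u) := by
    calc 2*u = 1*(2*u) := (one_mul _).symm
      _ ≤ _ := Nat.mul_le_mul_right _ hm
  have ha1 : a 1 ≤ m := by
    by_contra hc
    push_neg at hc
    have hmem : 1 + m*(2*u) ∈ beads (2*u) a := (mem_beads_comp hs (by omega) (by omega)).mpr hc
    have hy := hup _ hmem (by omega)
    have he : 1 + m*(2*u) - (m*(2*u)+1) = 0 := by omega
    rw [he] at hy
    exact zero_not_mem_beads hs a hy
  have halast : a (2*u-1) + 1 ≤ m := by
    by_contra hc
    push_neg at hc
    have e2 : (m-1)*(2*u) = m*(2*u) - 2*u := by rw [Nat.sub_mul, one_mul]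
    have hmem : (2*u-1) + (m-1)*(2*u) ∈ beads (2*u) a :=
      (mem_beads_comp hs (by omega) (by omega)).mpr (by omega)
    have hy := hdown _ hmem (by omega)
    have he : (2*u-1) + (m-1)*(2*u) - (m*(2*u)-1) = 0 := by omega
    rw [he] at hy
    exact zero_not_mem_beads hs a hy
  have hstepup : ∀ r, 2 ≤ r → r ≤ 2*u-1 → a r ≤ a (r-1) + m := by
    intro r h2 h3
    by_contra hc
    push_neg at hc
    set k := a (r-1) + m with hk
    have hmem : r + k*(2*u) ∈ beads (2*u) a :=
      (mem_beads_comp hs (by omega) (by omega)).mpr (by omega)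
    have e3 : m*(2*u) ≤ k*(2*u) := Nat.mul_le_mul_right _ (by omega)
    have hy := hup _ hmem (by omega)
    have e2 : (k-m)*(2*u) = k*(2*u) - m*(2*u) := by rw [Nat.sub_mul]
    have he : r + k*(2*u) - (m*(2*u)+1) = (r-1) + (k-m)*(2*u) := by omega
    rw [he, mem_beads_comp hs (by omega) (by omega)] at hy
    omega
  have hstepdown : ∀ r, 1 ≤ r → r ≤ 2*u-2 → a r ≤ a (r+1) + m := by
    intro r h1 h3
    by_contra hc
    push_neg at hc
    set k := a (r+1) + m with hk
    have hmem : r + k*(2*u) ∈ beads (2*u) a :=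
      (mem_beads_comp hs (by omega) (by omega)).mpr (by omega)
    have e3 : m*(2*u) ≤ k*(2*u) := Nat.mul_le_mul_right _ (by omega)
    have hy := hdown _ hmem (by omega)
    have e2 : (k-m)*(2*u) = k*(2*u) - m*(2*u) := by rw [Nat.sub_mul]
    have he : r + k*(2*u) - (m*(2*u)-1) = (r+1) + (k-m)*(2*u) := by omega
    rw [he, mem_beads_comp hs (by omega) (by omega)] at hy
    omega
  have hA : ∀ r, 1 ≤ r → r ≤ 2*u-1 → a r ≤ r*m := by
    intro r
    induction r with
    | zero => omega
    | succ r ih =>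
      intro h1 h2
      rcases Nat.eq_zero_or_pos r with rfl | hr
      · simpa using ha1
      · have hs1 := hstepup (r+1) (by omega) h2
        have hs2 := ih hr (by omega)
        have e : (r+1)*m = r*m + m := by rw [Nat.add_mul, one_mul]
        have e1 : r + 1 - 1 = r := by omega
        rw [e1] at hs1
        omega
  have hB : ∀ q, 1 ≤ q → q ≤ 2*u-1 → a (2*u-q) + 1 ≤ q*m := by
    intro q
    induction q with
    | zero => omega
    | succ q ih =>
      intro h1 h2
      rcases Nat.eq_zero_or_pos q with rfl | hq
      · simpa using halast
      · have hsd := hstepdown (2*u-(q+1)) (by omega) (by omega)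
        have e1 : 2*u-(q+1)+1 = 2*u-q := by omega
        rw [e1] at hsd
        have hs2 := ih hq (by omega)
        have e : (q+1)*m = q*m + m := by rw [Nat.add_mul, one_mul]
        omega
  intro r hr
  rw [Finset.mem_Icc] at hr
  unfold bnd
  split_ifs with h
  · exact hA r hr.1 hr.2
  · have hq := hB (2*u-r) (by omega) (by omega)
    have e1 : 2*u-(2*u-r) = r := by omega
    rw [e1] at hq
    omega


/-! ### arithmetic evaluation -/

lemma sumQuad (α β γ : ℤ) (N : ℕ) :
    6 * (∑ r ∈ Finset.Icc 1 N, (α + β*(r:ℤ) + γ*(r:ℤ)^2))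
      = 6*α*N + 3*β*N*(N+1) + γ*N*(N+1)*(2*N+1) := by
  induction N with
  | zero => simp
  | succ N ih =>
    rw [Finset.sum_Icc_succ_top (by omega)]
    push_cast
    push_cast at ih
    linear_combination ih

lemma sum_ite_split (u N : ℕ) (f g : ℕ → ℤ) (hN : u - 1 ≤ N) :
    ∑ r ∈ Finset.Icc 1 N, (if r ≤ u-1 then f r else g r)
      = ∑ r ∈ Finset.Icc 1 N, g r + ∑ r ∈ Finset.Icc 1 (u-1), (f r - g r) := by
  have h1 : ∀ r ∈ Finset.Icc 1 N, (if r ≤ u-1 then f r else g r)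
      = g r + (if r ≤ u-1 then f r - g r else 0) := by
    intro r _
    split_ifs <;> ring
  rw [Finset.sum_congr rfl h1, Finset.sum_add_distrib]
  congr 1
  rw [← Finset.sum_filter]
  congr 1
  ext r
  simp only [Finset.mem_filter, Finset.mem_Icc]
  omega

lemma cast_mul_pred (b : ℕ) : ((b*(b-1) : ℕ) : ℤ) = (b:ℤ)^2 - b := by
  cases b with
  | zero => simp
  | succ k => push_cast [Nat.succ_sub_one]; ring

lemma final_arith {m u n S W : ℕ} (hm : 1 ≤ m) (hu : 1 ≤ u)
    (hn : n = ∑ r ∈ Finset.Icc 1 (2*u-1), bnd m u r)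
    (hWdef : W = ∑ r ∈ Finset.Icc 1 (2*u-1),
      (2*r*(bnd m u r) + (2*u)*((bnd m u r)*((bnd m u r)-1))))
    (hS : 2*S + n*(n-1) = W) :
    6*S + 3*m*u^2 = m^2*u^2*(u^2+2) := by
  have hN1c : ((2*u-1 : ℕ) : ℤ) = 2*(u:ℤ) - 1 := by
    rw [Nat.cast_sub (by omega)]; push_cast; ring
  have hN2c : ((u-1 : ℕ) : ℤ) = (u:ℤ) - 1 := by
    rw [Nat.cast_sub (by omega)]
    push_cast; ring
  have hbndcast : ∀ r ∈ Finset.Icc 1 (2*u-1),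
      ((bnd m u r : ℕ) : ℤ) = (if r ≤ u-1 then (r:ℤ)*(m:ℤ) else 2*(u:ℤ)*(m:ℤ) - (r:ℤ)*(m:ℤ) - 1) := by
    intro r hr
    rw [Finset.mem_Icc] at hr
    unfold bnd
    split_ifs with h
    · push_cast; ring
    · have h1 : 1 ≤ (2*u - r) * m := by
        have h2 : 1 ≤ 2*u - r := by omega
        calc 1 = 1*1 := rfl
          _ ≤ (2*u-r)*m := Nat.mul_le_mul h2 hm
      rw [Nat.cast_sub h1, Nat.cast_mul, Nat.cast_sub (by omega : r ≤ 2*u)]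
      push_cast
      ring
  -- the n computation
  have hncast : (n:ℤ) = ∑ r ∈ Finset.Icc 1 (2*u-1),
      (if r ≤ u-1 then (r:ℤ)*(m:ℤ) else 2*(u:ℤ)*(m:ℤ) - (r:ℤ)*(m:ℤ) - 1) := by
    rw [hn, Nat.cast_sum]
    exact Finset.sum_congr rfl hbndcast
  have hsplitn := sum_ite_split u (2*u-1) (fun r => (r:ℤ)*(m:ℤ))
      (fun r => 2*(u:ℤ)*(m:ℤ) - (r:ℤ)*(m:ℤ) - 1) (by omega)
  have s1 : 6 * ∑ r ∈ Finset.Icc 1 (2*u-1), (2*(u:ℤ)*(m:ℤ) - (r:ℤ)*(m:ℤ) - 1)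
      = 6*(2*(u:ℤ)*(m:ℤ) - 1)*(2*u-1 : ℕ) + 3*(-(m:ℤ))*(2*u-1 : ℕ)*((2*u-1 : ℕ)+1)
        + 0*(2*u-1 : ℕ)*((2*u-1 : ℕ)+1)*(2*(2*u-1 : ℕ)+1) := by
    rw [Finset.sum_congr rfl (fun (r : ℕ) _ => (by ring :
      (2*(u:ℤ)*(m:ℤ) - (r:ℤ)*(m:ℤ) - 1)
        = (2*(u:ℤ)*(m:ℤ) - 1) + (-(m:ℤ))*(r:ℤ) + 0*(r:ℤ)^2))]
    exact sumQuad _ _ _ _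
  have s2 : 6 * ∑ r ∈ Finset.Icc 1 (u-1), ((r:ℤ)*(m:ℤ) - (2*(u:ℤ)*(m:ℤ) - (r:ℤ)*(m:ℤ) - 1))
      = 6*(1 - 2*(u:ℤ)*(m:ℤ))*(u-1 : ℕ) + 3*(2*(m:ℤ))*(u-1 : ℕ)*((u-1 : ℕ)+1)
        + 0*(u-1 : ℕ)*((u-1 : ℕ)+1)*(2*(u-1 : ℕ)+1) := by
    rw [Finset.sum_congr rfl (fun (r : ℕ) _ => (by ring :
      ((r:ℤ)*(m:ℤ) - (2*(u:ℤ)*(m:ℤ) - (r:ℤ)*(m:ℤ) - 1))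
        = (1 - 2*(u:ℤ)*(m:ℤ)) + (2*(m:ℤ))*(r:ℤ) + 0*(r:ℤ)^2))]
    exact sumQuad _ _ _ _
  have h6n : 6*(n:ℤ) = 6*(m:ℤ)*(u:ℤ)^2 - 6*(u:ℤ) := by
    rw [hncast, hsplitn, mul_add, s1, s2, hN1c, hN2c]
    ring
  -- the weight computation
  have hWcast : (W:ℤ) = ∑ r ∈ Finset.Icc 1 (2*u-1),
      (if r ≤ u-1
        then 2*(r:ℤ)*((r:ℤ)*(m:ℤ)) + 2*(u:ℤ)*(((r:ℤ)*(m:ℤ))^2 - (r:ℤ)*(m:ℤ))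
        else 2*(r:ℤ)*(2*(u:ℤ)*(m:ℤ) - (r:ℤ)*(m:ℤ) - 1)
          + 2*(u:ℤ)*((2*(u:ℤ)*(m:ℤ) - (r:ℤ)*(m:ℤ) - 1)^2 - (2*(u:ℤ)*(m:ℤ) - (r:ℤ)*(m:ℤ) - 1))) := by
    rw [hWdef, Nat.cast_sum]
    refine Finset.sum_congr rfl (fun r hr => ?_)
    have e1 : ((2*r*(bnd m u r) + (2*u)*((bnd m u r)*((bnd m u r)-1)) : ℕ) : ℤ)
        = 2*(r:ℤ)*((bnd m u r : ℕ):ℤ) + 2*(u:ℤ)*(((bnd m u r)*((bnd m u r)-1) : ℕ) : ℤ) := by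
      push_cast
      ring
    rw [e1, cast_mul_pred, hbndcast r hr]
    rw [apply_ite (fun A : ℤ => 2*(r:ℤ)*A + 2*(u:ℤ)*(A^2 - A))]
  have hsplitW := sum_ite_split u (2*u-1)
      (fun r => 2*(r:ℤ)*((r:ℤ)*(m:ℤ)) + 2*(u:ℤ)*(((r:ℤ)*(m:ℤ))^2 - (r:ℤ)*(m:ℤ)))
      (fun r => 2*(r:ℤ)*(2*(u:ℤ)*(m:ℤ) - (r:ℤ)*(m:ℤ) - 1)
          + 2*(u:ℤ)*((2*(u:ℤ)*(m:ℤ) - (r:ℤ)*(m:ℤ) - 1)^2 - (2*(u:ℤ)*(m:ℤ) - (r:ℤ)*(m:ℤ) - 1)))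
      (by omega)
  have s3 : 6 * ∑ r ∈ Finset.Icc 1 (2*u-1),
      (2*(r:ℤ)*(2*(u:ℤ)*(m:ℤ) - (r:ℤ)*(m:ℤ) - 1)
          + 2*(u:ℤ)*((2*(u:ℤ)*(m:ℤ) - (r:ℤ)*(m:ℤ) - 1)^2 - (2*(u:ℤ)*(m:ℤ) - (r:ℤ)*(m:ℤ) - 1)))
      = 6*(4*(u:ℤ) - 12*(m:ℤ)*(u:ℤ)^2 + 8*(m:ℤ)^2*(u:ℤ)^3)*(2*u-1 : ℕ)
        + 3*(-2 + 10*(m:ℤ)*(u:ℤ) - 8*(m:ℤ)^2*(u:ℤ)^2)*(2*u-1 : ℕ)*((2*u-1 : ℕ)+1)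
        + (-2*(m:ℤ) + 2*(m:ℤ)^2*(u:ℤ))*(2*u-1 : ℕ)*((2*u-1 : ℕ)+1)*(2*(2*u-1 : ℕ)+1) := by
    rw [Finset.sum_congr rfl (fun (r : ℕ) _ => (by ring :
      (2*(r:ℤ)*(2*(u:ℤ)*(m:ℤ) - (r:ℤ)*(m:ℤ) - 1)
          + 2*(u:ℤ)*((2*(u:ℤ)*(m:ℤ) - (r:ℤ)*(m:ℤ) - 1)^2 - (2*(u:ℤ)*(m:ℤ) - (r:ℤ)*(m:ℤ) - 1)))
        = (4*(u:ℤ) - 12*(m:ℤ)*(u:ℤ)^2 + 8*(m:ℤ)^2*(u:ℤ)^3)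
          + (-2 + 10*(m:ℤ)*(u:ℤ) - 8*(m:ℤ)^2*(u:ℤ)^2)*(r:ℤ)
          + (-2*(m:ℤ) + 2*(m:ℤ)^2*(u:ℤ))*(r:ℤ)^2))]
    exact sumQuad _ _ _ _
  have s4 : 6 * ∑ r ∈ Finset.Icc 1 (u-1),
      ((2*(r:ℤ)*((r:ℤ)*(m:ℤ)) + 2*(u:ℤ)*(((r:ℤ)*(m:ℤ))^2 - (r:ℤ)*(m:ℤ)))
        - (2*(r:ℤ)*(2*(u:ℤ)*(m:ℤ) - (r:ℤ)*(m:ℤ) - 1)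
          + 2*(u:ℤ)*((2*(u:ℤ)*(m:ℤ) - (r:ℤ)*(m:ℤ) - 1)^2 - (2*(u:ℤ)*(m:ℤ) - (r:ℤ)*(m:ℤ) - 1))))
      = 6*(-4*(u:ℤ) + 12*(m:ℤ)*(u:ℤ)^2 - 8*(m:ℤ)^2*(u:ℤ)^3)*(u-1 : ℕ)
        + 3*(2 - 12*(m:ℤ)*(u:ℤ) + 8*(m:ℤ)^2*(u:ℤ)^2)*(u-1 : ℕ)*((u-1 : ℕ)+1)
        + (4*(m:ℤ))*(u-1 : ℕ)*((u-1 : ℕ)+1)*(2*(u-1 : ℕ)+1) := by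
    rw [Finset.sum_congr rfl (fun (r : ℕ) _ => (by ring :
      ((2*(r:ℤ)*((r:ℤ)*(m:ℤ)) + 2*(u:ℤ)*(((r:ℤ)*(m:ℤ))^2 - (r:ℤ)*(m:ℤ)))
        - (2*(r:ℤ)*(2*(u:ℤ)*(m:ℤ) - (r:ℤ)*(m:ℤ) - 1)
          + 2*(u:ℤ)*((2*(u:ℤ)*(m:ℤ) - (r:ℤ)*(m:ℤ) - 1)^2 - (2*(u:ℤ)*(m:ℤ) - (r:ℤ)*(m:ℤ) - 1))))
        = (-4*(u:ℤ) + 12*(m:ℤ)*(u:ℤ)^2 - 8*(m:ℤ)^2*(u:ℤ)^3)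
          + (2 - 12*(m:ℤ)*(u:ℤ) + 8*(m:ℤ)^2*(u:ℤ)^2)*(r:ℤ)
          + (4*(m:ℤ))*(r:ℤ)^2))]
    exact sumQuad _ _ _ _
  have h6W : 6*(W:ℤ) = 6*(u:ℤ) + 6*(u:ℤ)^2 - 12*(m:ℤ)*(u:ℤ)^2 - 12*(m:ℤ)*(u:ℤ)^3
      + 4*(m:ℤ)^2*(u:ℤ)^2 + 8*(m:ℤ)^2*(u:ℤ)^4 := by
    rw [hWcast, hsplitW, mul_add, s3, s4, hN1c, hN2c]
    ring
  -- combining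
  have h0 := congrArg (fun z : ℕ => (z:ℤ)) hS
  rw [Nat.cast_add, cast_mul_pred] at h0
  push_cast at h0
  -- h0 : 2*S + ((n:ℤ)^2 - n) = W
  have hZ2 : 36*(S:ℤ) + 18*(m:ℤ)*(u:ℤ)^2 = 6*((m:ℤ)^2*(u:ℤ)^2*((u:ℤ)^2+2)) := by
    linear_combination 18*h0 + 3*h6W + (-3*(n:ℤ) + 3 - 3*((m:ℤ)*(u:ℤ)^2 - (u:ℤ)))*h6n
  have hZ3 : 36*S + 18*m*u^2 = 6*(m^2*u^2*(u^2+2)) := by exact_mod_cast hZ2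
  have hZ4 : 6*(6*S + 3*m*u^2) = 6*(m^2*u^2*(u^2+2)) := by linarith [hZ3]
  exact Nat.eq_of_mul_eq_mul_left (by norm_num) hZ4

end TripleCore

open TripleCore in
theorem longest_triple_core_even (m t : ℕ) (hm : 1 ≤ m) (ht : 2 ≤ t) :
    let s := 2 * t - 2
    let P : List ℕ → Prop := fun l => IsPartition l ∧ IsCore s l ∧
      IsCore (m * s - 1) l ∧ IsCore (m * s + 1) l
    (∃ l : List ℕ, P l ∧ (∀ l' : List ℕ, P l' → l'.length ≤ l.length) ∧
      6 * l.sum = m ^ 2 * (t - 1) ^ 2 * (t ^ 2 - 2 * t + 3) - 3 * m * (t - 1) ^ 2) ∧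
    (∀ l : List ℕ, P l → (∀ l' : List ℕ, P l' → l'.length ≤ l.length) →
      6 * l.sum = m ^ 2 * (t - 1) ^ 2 * (t ^ 2 - 2 * t + 3) - 3 * m * (t - 1) ^ 2) := by
  intro s P
  have hPdef : ∀ l, P l ↔ (IsPartition l ∧ IsCore s l ∧
      IsCore (m * s - 1) l ∧ IsCore (m * s + 1) l) := fun l => Iff.rfl
  have hs2 : s = 2 * t - 2 := rfl
  set u := t - 1 with hudef
  have hu : 1 ≤ u := by omega
  have hsu : s = 2 * u := by omega
  have hs2u : 2 ≤ 2*u := by omega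
  have h2ms : 2 ≤ m*(2*u) := by
    calc 2 = 1 * 2 := rfl
      _ ≤ m * (2*u) := Nat.mul_le_mul hm hs2u
  have hPiff : ∀ l, P l ↔ (IsPartition l ∧ IsCore (2*u) l ∧
      IsCore (m*(2*u) - 1) l ∧ IsCore (m*(2*u) + 1) l) := by
    intro l
    rw [hPdef l, hsu]
  -- conversion of the weight formula
  have hu2 : 1 ≤ u^2 := Nat.one_le_pow _ _ (by omega)
  have ht2 : t^2 - 2*t + 3 = u^2 + 2 := by
    have e : t^2 = u^2 + 2*u + 1 := by
      have h' : t = u + 1 := by omega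
      rw [h']; ring
    omega
  have hconv : ∀ S : ℕ, 6*S + 3*m*u^2 = m^2*u^2*(u^2+2) →
      6*S = m ^ 2 * u ^ 2 * (t ^ 2 - 2 * t + 3) - 3 * m * u ^ 2 := by
    intro S hS
    rw [ht2]
    omega
  -- the explicit longest partition
  have h00 : (0:ℕ) ∉ beads (2*u) (bnd m u) := zero_not_mem_beads hs2u _
  set l₀ := ofBeads (beads (2*u) (bnd m u)) with hl0
  have hpart0 : IsPartition l₀ := ofBeads_isPartition h00
  have hbead0 : beadSet l₀ = beads (2*u) (bnd m u) := ofBeads_beadSet h00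
  have hcard0 : l₀.length = ∑ r ∈ Finset.Icc 1 (2*u-1), bnd m u r := by
    rw [hl0, ofBeads_length, beads_card hs2u]
  have hex : P l₀ := by
    rw [hPiff l₀]
    refine ⟨hpart0, ?_, ?_, ?_⟩
    · exact (isCore_iff hpart0 (by omega)).mpr
        (by rw [hbead0]; exact beads_closed_sub_s hs2u _)
    · exact (isCore_iff hpart0 (by omega : 1 ≤ m*(2*u) - 1)).mpr
        (by rw [hbead0]; exact bnd_closed_down hm hu)
    · exact (isCore_iff hpart0 (by omega : 1 ≤ m*(2*u) + 1)).mpr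
        (by rw [hbead0]; exact bnd_closed_up hm hu)
  -- structure of an arbitrary partition satisfying P
  have hstruct : ∀ l, P l → ∃ a : ℕ → ℕ, beadSet l = beads (2*u) a
      ∧ l.length = ∑ r ∈ Finset.Icc 1 (2*u-1), a r
      ∧ (∀ r ∈ Finset.Icc 1 (2*u-1), a r ≤ bnd m u r)
      ∧ 2 * l.sum + l.length*(l.length-1)
          = ∑ r ∈ Finset.Icc 1 (2*u-1), (2*r*(a r) + (2*u)*((a r)*((a r)-1))) := by
    intro l hPl
    rw [hPiff l] at hPl
    obtain ⟨hpart, hc1, hc2, hc3⟩ := hPl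
    have hb0 : (0:ℕ) ∉ beadSet l := zero_not_mem_beadSet hpart.2
    have hcs := (isCore_iff hpart (by omega : 1 ≤ 2*u)).mp hc1
    have hcm := (isCore_iff hpart (by omega : 1 ≤ m*(2*u) - 1)).mp hc2
    have hcp := (isCore_iff hpart (by omega : 1 ≤ m*(2*u) + 1)).mp hc3
    have hBeq : beadSet l
        = beads (2*u) (fun r => ((beadSet l).filter (fun x => x % (2*u) = r)).card) :=
      eq_beads_of_closed hs2u hb0 hcs
    rw [hBeq] at hcm hcp
    refine ⟨_, hBeq, ?_, ?_, ?_⟩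
    · rw [← card_beadSet hpart.1]
      conv_lhs => rw [hBeq]
      exact beads_card hs2u _
    · exact a_bounds hm hu hcp hcm
    · have hsb := sum_beadSet hpart.1
      rw [hBeq, beads_sum hs2u] at hsb
      omega
  have hmax : ∀ l', P l' → l'.length ≤ l₀.length := by
    intro l' hPl'
    obtain ⟨a, _, hlen, hbound, _⟩ := hstruct l' hPl'
    rw [hlen, hcard0]
    exact Finset.sum_le_sum hbound
  have hkey : ∀ l, P l → l.length = l₀.length →
      6 * l.sum + 3*m*u^2 = m^2*u^2*(u^2+2) := by
    intro l hPl hlenEq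
    obtain ⟨a, hBeq, hlen, hbound, hsum⟩ := hstruct l hPl
    have hsumeq : ∑ r ∈ Finset.Icc 1 (2*u-1), a r
        = ∑ r ∈ Finset.Icc 1 (2*u-1), bnd m u r := by
      rw [← hlen, hlenEq, hcard0]
    have hae := (Finset.sum_eq_sum_iff_of_le hbound).mp hsumeq
    have hsum' : 2*l.sum + l.length*(l.length-1)
        = ∑ r ∈ Finset.Icc 1 (2*u-1), (2*r*(bnd m u r) + (2*u)*((bnd m u r)*((bnd m u r)-1))) := by
      rw [hsum]
      exact Finset.sum_congr rfl (fun r hr => by rw [hae r hr])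
    exact final_arith hm hu (hlenEq.trans hcard0) rfl hsum'
  constructor
  · exact ⟨l₀, hex, hmax, hconv _ (hkey l₀ hex rfl)⟩
  · intro l hPl hmaxl
    have h1 : l.length = l₀.length := le_antisymm (hmax l hPl) (hmaxl l₀ hex)
    exact hconv _ (hkey l hPl h1)
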